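/- Let m ≠ 0 and suppose d ≠ p − 1/2 for every p ∈ ℤ≥0. Then the Verma module V^d over s(1/1) is irreducible. -/

import Mathlib

/-- The `N = 1` super Schrödinger algebra 𝔰(1/1) represented on a complex vector space
`V`, together with the lowest weight (Verma) structure of conformal weight `d` and mass
`m`.  The even generators are `H, P, G, D, K, M` (satisfying the sch(1) relations, `M`
central), the odd generators are `Q, S, X`, and `Chi` is the action of the odd scalar χ
(`χ² = m/2`, `X v₀ = χ v₀`).  Relations between generators not listed below vanish.
The Verma module `V^d` has (super) basis `{G^k K^ℓ v₀, G^k K^ℓ S v₀}` over the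
coefficient superalgebra `ℂ[χ]`, i.e. the ℂ-basis `{G^k K^ℓ S^a χ^c v₀}`. -/
structure SSch1Verma (d m : ℂ) (V : Type*) [AddCommGroup V] [Module ℂ V] where
  H : Module.End ℂ V
  P : Module.End ℂ V
  G : Module.End ℂ V
  D : Module.End ℂ V
  K : Module.End ℂ V
  M : Module.End ℂ V
  Q : Module.End ℂ V
  S : Module.End ℂ V
  X : Module.End ℂ V
  Chi : Module.End ℂ V
  -- nonvanishing even-even commutators
  rel_HD : H * D - D * H = (2 : ℂ) • H
  rel_HK : H * K - K * H = D
  rel_DK : D * K - K * D = (2 : ℂ) • K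
  rel_PG : P * G - G * P = M
  rel_HG : H * G - G * H = P
  rel_DG : D * G - G * D = G
  rel_PD : P * D - D * P = P
  rel_PK : P * K - K * P = G
  -- vanishing even-even commutators
  rel_HP : H * P = P * H
  rel_HM : H * M = M * H
  rel_PM : P * M = M * P
  rel_GK : G * K = K * G
  rel_GM : G * M = M * G
  rel_DM : D * M = M * D
  rel_KM : K * M = M * K
  -- nonvanishing even-odd commutators
  rel_QD : Q * D - D * Q = Q
  rel_QK : Q * K - K * Q = S
  rel_DS : D * S - S * D = S
  rel_HS : H * S - S * H = Q
  rel_QG : Q * G - G * Q = X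
  rel_PS : P * S - S * P = X
  -- vanishing even-odd commutators
  rel_QH : Q * H = H * Q
  rel_QP : Q * P = P * Q
  rel_QM : Q * M = M * Q
  rel_SG : S * G = G * S
  rel_SK : S * K = K * S
  rel_SM : S * M = M * S
  rel_XH : X * H = H * X
  rel_XP : X * P = P * X
  rel_XG : X * G = G * X
  rel_XD : X * D = D * X
  rel_XK : X * K = K * X
  rel_XM : X * M = M * X
  -- odd-odd anticommutators
  rel_QQ : Q * Q + Q * Q = -((2 : ℂ) • H)
  rel_SS : S * S + S * S = -((2 : ℂ) • K)
  rel_XX : X * X + X * X = -M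
  rel_QX : Q * X + X * Q = -P
  rel_SX : S * X + X * S = -G
  rel_QS : Q * S + S * Q = -D
  -- χ is an odd scalar: it commutes with the even generators, anticommutes with the
  -- odd generators and satisfies χ² = m/2
  chi_H : Chi * H = H * Chi
  chi_P : Chi * P = P * Chi
  chi_G : Chi * G = G * Chi
  chi_D : Chi * D = D * Chi
  chi_K : Chi * K = K * Chi
  chi_M : Chi * M = M * Chi
  chi_Q : Chi * Q = -(Q * Chi)
  chi_S : Chi * S = -(S * Chi)
  chi_X : Chi * X = -(X * Chi)
  chi_sq : Chi * Chi = (m / 2) • (1 : Module.End ℂ V)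
  -- the lowest weight vector
  v0 : V
  lw_Q : Q v0 = 0
  lw_P : P v0 = 0
  lw_D : D v0 = (-d) • v0
  lw_M : M v0 = m • v0
  lw_X : X v0 = Chi v0
  -- PBW basis of the Verma module
  pbw_indep : LinearIndependent ℂ (fun i : ℕ × ℕ × Bool × Bool =>
    (G ^ i.1 * K ^ i.2.1 * (if i.2.2.1 then S else 1) * (if i.2.2.2 then Chi else 1)) v0)
  pbw_span : Submodule.span ℂ (Set.range (fun i : ℕ × ℕ × Bool × Bool =>
    (G ^ i.1 * K ^ i.2.1 * (if i.2.2.1 then S else 1) * (if i.2.2.2 then Chi else 1)) v0)) = ⊤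

namespace SSch1Verma

variable {d m : ℂ} {V : Type*} [AddCommGroup V] [Module ℂ V]

/-- A singular vector of the Verma module: homogeneous with respect to the `D`-grading
(i.e. a `D`-eigenvector), not a scalar multiple of the lowest weight vector `v₀`
(scalars being the coefficient superalgebra `ℂ[χ]`), and annihilated by `Q` and `P`. -/
def IsSingular (ρ : SSch1Verma d m V) (v : V) : Prop :=
  (∃ n : ℂ, ρ.D v = n • v) ∧
  (∀ a b : ℂ, v ≠ a • ρ.v0 + b • ρ.Chi ρ.v0) ∧
  ρ.Q v = 0 ∧ ρ.P v = 0

/-- A subspace invariant under the action of 𝔰(1/1) (and under the odd scalar χ). -/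
def Invariant (ρ : SSch1Verma d m V) (W : Submodule ℂ V) : Prop :=
  ∀ w ∈ W, ρ.H w ∈ W ∧ ρ.P w ∈ W ∧ ρ.G w ∈ W ∧ ρ.D w ∈ W ∧ ρ.K w ∈ W ∧
    ρ.M w ∈ W ∧ ρ.Q w ∈ W ∧ ρ.S w ∈ W ∧ ρ.X w ∈ W ∧ ρ.Chi w ∈ W

/-- The submodule generated by a set of vectors: the smallest invariant subspace
containing it. -/
def gen (ρ : SSch1Verma d m V) (s : Set V) : Submodule ℂ V :=
  sInf {W | ρ.Invariant W ∧ s ⊆ W}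

/-- A singular vector of the factor module `V/J`, expressed in terms of representatives:
homogeneous with respect to the induced `D`-grading, not a scalar multiple of the image
of the lowest weight vector, and annihilated by the induced actions of `Q` and `P`. -/
def IsSingularMod (ρ : SSch1Verma d m V) (J : Submodule ℂ V) (v : V) : Prop :=
  (∃ n : ℂ, ρ.D v - n • v ∈ J) ∧
  (∀ a b : ℂ, v - (a • ρ.v0 + b • ρ.Chi ρ.v0) ∉ J) ∧
  ρ.Q v ∈ J ∧ ρ.P v ∈ J

end SSch1Verma

/-! `Q` and `P` lower the PBW degree by one, so every nonzero invariant subspace contains a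
nonzero vector killed by both. In the PBW basis, `Q v = P v = 0` is a recurrence on the
coefficients of `v` which, as long as `m ≠ 0` and `d - p + 1/2 ≠ 0` for all `p ∈ ℕ`, forces all
of them to vanish except those of `v₀` and `χ v₀`. From a nonzero combination of `v₀` and `χ v₀`
one recovers `v₀` with the help of `χ` and `Q G`, and `v₀` generates the whole Verma module. -/

theorem mul_pow_eq_pow_mul_add_nsmul {R : Type*} [Semiring R] {a b c : R}
    (h : a * b = b * a + c) (hc : Commute b c) (n : ℕ) :
    a * b ^ n = b ^ n * a + n • (b ^ (n - 1) * c) := by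
  induction n with
  | zero => simp
  | succ n ih =>
    rcases n with _ | n
    · simpa using h
    · rw [pow_succ, ← mul_assoc, ih, add_mul, mul_assoc, h, smul_mul_assoc, mul_assoc,
        ← hc.eq, ← mul_assoc, mul_add, ← mul_assoc, ← pow_succ, ← pow_succ]
      simp only [Nat.add_sub_cancel, succ_nsmul _ (n + 1)]
      abel

theorem Module.Basis.repr_apply_eq_of_forall {ι R M : Type*} [CommSemiring R] [AddCommMonoid M]
    [Module R M] (b : Module.Basis ι R M) (f : M →ₗ[R] M) (j : ι) (φ : M →ₗ[R] R)
    (h : ∀ i, b.repr (f (b i)) j = φ (b i)) (v : M) : b.repr (f v) j = φ v :=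
  LinearMap.congr_fun (b.ext (f₁ := b.coord j ∘ₗ f) h) v

namespace SSch1Verma

variable {d m : ℂ} {V : Type*} [AddCommGroup V] [Module ℂ V] (ρ : SSch1Verma d m V)

noncomputable def pbwBasis : Module.Basis (ℕ × ℕ × Bool × Bool) ℂ V :=
  Module.Basis.mk ρ.pbw_indep ρ.pbw_span.ge

lemma pbwBasis_apply (k ℓ : ℕ) (a c : Bool) :
    ρ.pbwBasis (k, ℓ, a, c) =
      (ρ.G ^ k) ((ρ.K ^ ℓ) ((if a then ρ.S else 1) ((if c then ρ.Chi else 1) ρ.v0))) := by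
  cases a <;> cases c <;> simp [pbwBasis, Module.End.mul_apply]

lemma commute_G_K : Commute ρ.G ρ.K := ρ.rel_GK
lemma commute_X_G : Commute ρ.X ρ.G := ρ.rel_XG
lemma commute_X_K : Commute ρ.X ρ.K := ρ.rel_XK
lemma commute_S_K : Commute ρ.S ρ.K := ρ.rel_SK
lemma commute_M_G : Commute ρ.M ρ.G := ρ.rel_GM.symm
lemma commute_M_K : Commute ρ.M ρ.K := ρ.rel_KM.symm
lemma commute_Chi_G : Commute ρ.Chi ρ.G := ρ.chi_G
lemma commute_Chi_K : Commute ρ.Chi ρ.K := ρ.chi_K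

lemma Q_mul_G_pow (k : ℕ) : ρ.Q * ρ.G ^ k = ρ.G ^ k * ρ.Q + k • (ρ.G ^ (k - 1) * ρ.X) :=
  mul_pow_eq_pow_mul_add_nsmul (sub_eq_iff_eq_add'.mp ρ.rel_QG) ρ.commute_X_G.symm k

lemma Q_mul_K_pow (ℓ : ℕ) : ρ.Q * ρ.K ^ ℓ = ρ.K ^ ℓ * ρ.Q + ℓ • (ρ.K ^ (ℓ - 1) * ρ.S) :=
  mul_pow_eq_pow_mul_add_nsmul (sub_eq_iff_eq_add'.mp ρ.rel_QK) ρ.commute_S_K.symm ℓ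

lemma P_mul_G_pow (k : ℕ) : ρ.P * ρ.G ^ k = ρ.G ^ k * ρ.P + k • (ρ.G ^ (k - 1) * ρ.M) :=
  mul_pow_eq_pow_mul_add_nsmul (sub_eq_iff_eq_add'.mp ρ.rel_PG) ρ.commute_M_G.symm k

lemma P_mul_K_pow (ℓ : ℕ) : ρ.P * ρ.K ^ ℓ = ρ.K ^ ℓ * ρ.P + ℓ • (ρ.K ^ (ℓ - 1) * ρ.G) :=
  mul_pow_eq_pow_mul_add_nsmul (sub_eq_iff_eq_add'.mp ρ.rel_PK) ρ.commute_G_K.symm ℓ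

lemma Q_G_pow_K_pow_apply (k ℓ : ℕ) (y : V) :
    ρ.Q ((ρ.G ^ k) ((ρ.K ^ ℓ) y)) = (ρ.G ^ k) ((ρ.K ^ ℓ) (ρ.Q y))
      + (ℓ : ℂ) • (ρ.G ^ k) ((ρ.K ^ (ℓ - 1)) (ρ.S y))
      + (k : ℂ) • (ρ.G ^ (k - 1)) ((ρ.K ^ ℓ) (ρ.X y)) := by
  have hG := congr($(ρ.Q_mul_G_pow k) ((ρ.K ^ ℓ) y))
  have hK := congr($(ρ.Q_mul_K_pow ℓ) y)
  have hX := congr($((ρ.commute_X_K.pow_right ℓ).eq) y)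
  simp only [Module.End.mul_apply, LinearMap.add_apply, LinearMap.smul_apply] at hG hK hX
  rw [hG, hK, hX]
  simp only [map_add, ← Nat.cast_smul_eq_nsmul ℂ, map_smul]

lemma P_G_pow_K_pow_apply (k ℓ : ℕ) (y : V) :
    ρ.P ((ρ.G ^ k) ((ρ.K ^ ℓ) y)) = (ρ.G ^ k) ((ρ.K ^ ℓ) (ρ.P y))
      + (ℓ : ℂ) • (ρ.G ^ (k + 1)) ((ρ.K ^ (ℓ - 1)) y)
      + (k : ℂ) • (ρ.G ^ (k - 1)) ((ρ.K ^ ℓ) (ρ.M y)) := by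
  have hG := congr($(ρ.P_mul_G_pow k) ((ρ.K ^ ℓ) y))
  have hK := congr($(ρ.P_mul_K_pow ℓ) y)
  have hM := congr($((ρ.commute_M_K.pow_right ℓ).eq) y)
  have hGK := congr($((ρ.commute_G_K.pow_right (ℓ - 1)).eq) y)
  simp only [Module.End.mul_apply, LinearMap.add_apply, LinearMap.smul_apply] at hG hK hM hGK
  rw [hG, hK, hM, ← hGK, pow_succ, Module.End.mul_apply]
  simp only [map_add, ← Nat.cast_smul_eq_nsmul ℂ, map_smul]

lemma Chi_G_pow_K_pow_apply (k ℓ : ℕ) (y : V) :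
    ρ.Chi ((ρ.G ^ k) ((ρ.K ^ ℓ) y)) = (ρ.G ^ k) ((ρ.K ^ ℓ) (ρ.Chi y)) := by
  simpa using congr($(((ρ.commute_Chi_G.pow_right k).mul_right
    (ρ.commute_Chi_K.pow_right ℓ)).eq) y)

lemma Chi_Chi_apply (x : V) : ρ.Chi (ρ.Chi x) = (m / 2) • x := by
  simpa using congr($(ρ.chi_sq) x)

lemma Q_Chi_apply (x : V) : ρ.Q (ρ.Chi x) = -ρ.Chi (ρ.Q x) := by
  simpa using congr(-$(ρ.chi_Q) x).symm

lemma P_Chi_apply (x : V) : ρ.P (ρ.Chi x) = ρ.Chi (ρ.P x) := by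
  simpa using congr($(ρ.chi_P) x).symm

lemma X_Chi_apply (x : V) : ρ.X (ρ.Chi x) = -ρ.Chi (ρ.X x) := by
  simpa using congr(-$(ρ.chi_X) x).symm

lemma M_Chi_apply (x : V) : ρ.M (ρ.Chi x) = ρ.Chi (ρ.M x) := by
  simpa using congr($(ρ.chi_M) x).symm

lemma Chi_S_apply (x : V) : ρ.Chi (ρ.S x) = -ρ.S (ρ.Chi x) := by
  simpa using congr($(ρ.chi_S) x)

lemma Q_S_apply (x : V) : ρ.Q (ρ.S x) = -ρ.S (ρ.Q x) - ρ.D x := by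
  have := congr($(ρ.rel_QS) x)
  simp only [LinearMap.add_apply, Module.End.mul_apply, LinearMap.neg_apply] at this
  linear_combination (norm := module) this

lemma P_S_apply (x : V) : ρ.P (ρ.S x) = ρ.S (ρ.P x) + ρ.X x := by
  simpa [sub_eq_iff_eq_add'] using congr($(ρ.rel_PS) x)

lemma X_S_apply (x : V) : ρ.X (ρ.S x) = -ρ.S (ρ.X x) - ρ.G x := by
  have := congr($(ρ.rel_SX) x)
  simp only [LinearMap.add_apply, Module.End.mul_apply, LinearMap.neg_apply] at this
  linear_combination (norm := module) this

lemma S_S_apply (x : V) : ρ.S (ρ.S x) = -ρ.K x := by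
  have := congr($(ρ.rel_SS) x)
  simp only [LinearMap.add_apply, Module.End.mul_apply, LinearMap.neg_apply,
    LinearMap.smul_apply] at this
  linear_combination (norm := module) (1 / 2 : ℂ) • this

lemma M_S_apply (x : V) : ρ.M (ρ.S x) = ρ.S (ρ.M x) := by
  simpa using congr($(ρ.rel_SM) x).symm

lemma D_Chi_apply (x : V) : ρ.D (ρ.Chi x) = ρ.Chi (ρ.D x) := by
  simpa using congr($(ρ.chi_D) x).symm

lemma Q_pbwBasis_ff (k ℓ : ℕ) :
    ρ.Q (ρ.pbwBasis (k, ℓ, false, false)) =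
      (ℓ : ℂ) • ρ.pbwBasis (k, ℓ - 1, true, false) +
        (k : ℂ) • ρ.pbwBasis (k - 1, ℓ, false, true) := by
  simp [pbwBasis_apply, Q_G_pow_K_pow_apply, lw_Q, lw_X]

lemma Q_pbwBasis_ft (k ℓ : ℕ) :
    ρ.Q (ρ.pbwBasis (k, ℓ, false, true)) =
      (ℓ : ℂ) • ρ.pbwBasis (k, ℓ - 1, true, true) -
        ((k : ℂ) * (m / 2)) • ρ.pbwBasis (k - 1, ℓ, false, false) := by
  simp [pbwBasis_apply, Q_G_pow_K_pow_apply, Q_Chi_apply, X_Chi_apply, Chi_Chi_apply, lw_Q, lw_X,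
    mul_smul, sub_eq_add_neg]

lemma Q_pbwBasis_tf (k ℓ : ℕ) :
    ρ.Q (ρ.pbwBasis (k, ℓ, true, false)) =
      (d - ℓ - k) • ρ.pbwBasis (k, ℓ, false, false) -
        (k : ℂ) • ρ.pbwBasis (k - 1, ℓ, true, true) := by
  have hGK := congr($((ρ.commute_G_K.pow_right ℓ).eq) ρ.v0)
  simp only [pbwBasis_apply, Module.End.mul_apply, if_true, if_false, Bool.false_eq_true,
    Module.End.one_apply] at hGK ⊢
  rw [Q_G_pow_K_pow_apply, Q_S_apply, S_S_apply, X_S_apply, lw_Q, lw_X, lw_D]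
  simp only [map_sub, map_neg, map_smul, map_zero, ← hGK]
  rcases k with _ | k <;> rcases ℓ with _ | ℓ <;> simp [pow_succ] <;> module

lemma Q_pbwBasis_tt (k ℓ : ℕ) :
    ρ.Q (ρ.pbwBasis (k, ℓ, true, true)) =
      (d - ℓ - k) • ρ.pbwBasis (k, ℓ, false, true) +
        ((k : ℂ) * (m / 2)) • ρ.pbwBasis (k - 1, ℓ, true, false) := by
  have hGK := congr($((ρ.commute_G_K.pow_right ℓ).eq) (ρ.Chi ρ.v0))
  simp only [pbwBasis_apply, Module.End.mul_apply, if_true, if_false, Bool.false_eq_true,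
    Module.End.one_apply] at hGK ⊢
  rw [Q_G_pow_K_pow_apply, Q_S_apply, S_S_apply, X_S_apply, Q_Chi_apply, X_Chi_apply, D_Chi_apply,
    lw_Q, lw_X, lw_D, Chi_Chi_apply]
  simp only [map_sub, map_neg, map_smul, map_zero, ← hGK]
  rcases k with _ | k <;> rcases ℓ with _ | ℓ <;> simp [pow_succ] <;> module

lemma P_pbwBasis_ff (k ℓ : ℕ) :
    ρ.P (ρ.pbwBasis (k, ℓ, false, false)) =
      (ℓ : ℂ) • ρ.pbwBasis (k + 1, ℓ - 1, false, false) +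
        ((k : ℂ) * m) • ρ.pbwBasis (k - 1, ℓ, false, false) := by
  simp [pbwBasis_apply, P_G_pow_K_pow_apply, lw_P, lw_M, mul_smul]

lemma P_pbwBasis_ft (k ℓ : ℕ) :
    ρ.P (ρ.pbwBasis (k, ℓ, false, true)) =
      (ℓ : ℂ) • ρ.pbwBasis (k + 1, ℓ - 1, false, true) +
        ((k : ℂ) * m) • ρ.pbwBasis (k - 1, ℓ, false, true) := by
  simp [pbwBasis_apply, P_G_pow_K_pow_apply, P_Chi_apply, M_Chi_apply, lw_P, lw_M, mul_smul]

lemma P_pbwBasis_tf (k ℓ : ℕ) :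
    ρ.P (ρ.pbwBasis (k, ℓ, true, false)) =
      (ℓ : ℂ) • ρ.pbwBasis (k + 1, ℓ - 1, true, false) +
        ((k : ℂ) * m) • ρ.pbwBasis (k - 1, ℓ, true, false) + ρ.pbwBasis (k, ℓ, false, true) := by
  simp [pbwBasis_apply, P_G_pow_K_pow_apply, P_S_apply, M_S_apply, lw_P, lw_M, lw_X, mul_smul]
  abel

lemma P_pbwBasis_tt (k ℓ : ℕ) :
    ρ.P (ρ.pbwBasis (k, ℓ, true, true)) =
      (ℓ : ℂ) • ρ.pbwBasis (k + 1, ℓ - 1, true, true) +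
        ((k : ℂ) * m) • ρ.pbwBasis (k - 1, ℓ, true, true) -
          (m / 2) • ρ.pbwBasis (k, ℓ, false, false) := by
  simp [pbwBasis_apply, P_G_pow_K_pow_apply, P_S_apply, M_S_apply, P_Chi_apply, M_Chi_apply,
    X_Chi_apply, Chi_Chi_apply, lw_P, lw_M, lw_X, mul_smul]
  module

lemma Chi_pbwBasis_ff (k ℓ : ℕ) :
    ρ.Chi (ρ.pbwBasis (k, ℓ, false, false)) = ρ.pbwBasis (k, ℓ, false, true) := by
  simp [pbwBasis_apply, Chi_G_pow_K_pow_apply]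

lemma Chi_pbwBasis_ft (k ℓ : ℕ) :
    ρ.Chi (ρ.pbwBasis (k, ℓ, false, true)) = (m / 2) • ρ.pbwBasis (k, ℓ, false, false) := by
  simp [pbwBasis_apply, Chi_G_pow_K_pow_apply, Chi_Chi_apply]

lemma Chi_pbwBasis_tf (k ℓ : ℕ) :
    ρ.Chi (ρ.pbwBasis (k, ℓ, true, false)) = -ρ.pbwBasis (k, ℓ, true, true) := by
  simp [pbwBasis_apply, Chi_G_pow_K_pow_apply, Chi_S_apply]

lemma Chi_pbwBasis_tt (k ℓ : ℕ) :
    ρ.Chi (ρ.pbwBasis (k, ℓ, true, true)) = -((m / 2) • ρ.pbwBasis (k, ℓ, true, false)) := by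
  simp [pbwBasis_apply, Chi_G_pow_K_pow_apply, Chi_S_apply, Chi_Chi_apply]

lemma repr_Q_apply_ft (k ℓ : ℕ) (v : V) :
    ρ.pbwBasis.repr (ρ.Q v) (k, ℓ, false, true) =
      (k + 1) * ρ.pbwBasis.repr v (k + 1, ℓ, false, false) +
        (d - ℓ - k) * ρ.pbwBasis.repr v (k, ℓ, true, true) := by
  have h := ρ.pbwBasis.repr_apply_eq_of_forall ρ.Q (k, ℓ, false, true)
    (((k : ℂ) + 1) • ρ.pbwBasis.coord (k + 1, ℓ, false, false) +
      (d - ℓ - k) • ρ.pbwBasis.coord (k, ℓ, true, true)) ?_ v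
  · simpa using h
  rintro ⟨k', ℓ', _ | _, _ | _⟩ <;>
    simp [Q_pbwBasis_ff, Q_pbwBasis_ft, Q_pbwBasis_tf, Q_pbwBasis_tt, Finsupp.single_apply]
  all_goals split_ifs <;> simp_all
  all_goals omega

lemma repr_Q_apply_tf_zero (ℓ : ℕ) (v : V) :
    ρ.pbwBasis.repr (ρ.Q v) (0, ℓ, true, false) =
      (ℓ + 1) * ρ.pbwBasis.repr v (0, ℓ + 1, false, false) +
        m / 2 * ρ.pbwBasis.repr v (1, ℓ, true, true) := by
  have h := ρ.pbwBasis.repr_apply_eq_of_forall ρ.Q (0, ℓ, true, false)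
    (((ℓ : ℂ) + 1) • ρ.pbwBasis.coord (0, ℓ + 1, false, false) +
      (m / 2) • ρ.pbwBasis.coord (1, ℓ, true, true)) ?_ v
  · simpa using h
  rintro ⟨k', ℓ', _ | _, _ | _⟩ <;>
    simp [Q_pbwBasis_ff, Q_pbwBasis_ft, Q_pbwBasis_tf, Q_pbwBasis_tt, Finsupp.single_apply]
  all_goals split_ifs <;> simp_all
  all_goals omega

lemma repr_P_apply_ff_zero (ℓ : ℕ) (v : V) :
    ρ.pbwBasis.repr (ρ.P v) (0, ℓ, false, false) =
      m * ρ.pbwBasis.repr v (1, ℓ, false, false) -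
        m / 2 * ρ.pbwBasis.repr v (0, ℓ, true, true) := by
  have h := ρ.pbwBasis.repr_apply_eq_of_forall ρ.P (0, ℓ, false, false)
    (m • ρ.pbwBasis.coord (1, ℓ, false, false) -
      (m / 2) • ρ.pbwBasis.coord (0, ℓ, true, true)) ?_ v
  · simpa using h
  rintro ⟨k', ℓ', _ | _, _ | _⟩ <;>
    simp [P_pbwBasis_ff, P_pbwBasis_ft, P_pbwBasis_tf, P_pbwBasis_tt, Finsupp.single_apply]
  all_goals split_ifs <;> simp_all
  all_goals omega

lemma repr_P_apply_ff_succ (k ℓ : ℕ) (v : V) :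
    ρ.pbwBasis.repr (ρ.P v) (k + 1, ℓ, false, false) =
      (ℓ + 1) * ρ.pbwBasis.repr v (k, ℓ + 1, false, false) +
        (k + 2) * m * ρ.pbwBasis.repr v (k + 2, ℓ, false, false) -
          m / 2 * ρ.pbwBasis.repr v (k + 1, ℓ, true, true) := by
  have h := ρ.pbwBasis.repr_apply_eq_of_forall ρ.P (k + 1, ℓ, false, false)
    (((ℓ : ℂ) + 1) • ρ.pbwBasis.coord (k, ℓ + 1, false, false) +
      (((k : ℂ) + 2) * m) • ρ.pbwBasis.coord (k + 2, ℓ, false, false) -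
        (m / 2) • ρ.pbwBasis.coord (k + 1, ℓ, true, true)) ?_ v
  · simpa using h
  rintro ⟨k', ℓ', _ | _, _ | _⟩ <;>
    simp [P_pbwBasis_ff, P_pbwBasis_ft, P_pbwBasis_tf, P_pbwBasis_tt, Finsupp.single_apply]
  all_goals split_ifs <;> simp_all
  all_goals omega

lemma repr_P_apply_tt_zero (ℓ : ℕ) (v : V) :
    ρ.pbwBasis.repr (ρ.P v) (0, ℓ, true, true) =
      m * ρ.pbwBasis.repr v (1, ℓ, true, true) := by
  have h := ρ.pbwBasis.repr_apply_eq_of_forall ρ.P (0, ℓ, true, true)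
    (m • ρ.pbwBasis.coord (1, ℓ, true, true)) ?_ v
  · simpa using h
  rintro ⟨k', ℓ', _ | _, _ | _⟩ <;>
    simp [P_pbwBasis_ff, P_pbwBasis_ft, P_pbwBasis_tf, P_pbwBasis_tt, Finsupp.single_apply]
  all_goals split_ifs <;> simp_all
  all_goals omega

lemma repr_Chi_apply_ff (k ℓ : ℕ) (v : V) :
    ρ.pbwBasis.repr (ρ.Chi v) (k, ℓ, false, false) =
      m / 2 * ρ.pbwBasis.repr v (k, ℓ, false, true) := by
  have h := ρ.pbwBasis.repr_apply_eq_of_forall ρ.Chi (k, ℓ, false, false)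
    ((m / 2) • ρ.pbwBasis.coord (k, ℓ, false, true)) ?_ v
  · simpa using h
  rintro ⟨k', ℓ', _ | _, _ | _⟩ <;>
    simp [Chi_pbwBasis_ff, Chi_pbwBasis_ft, Chi_pbwBasis_tf, Chi_pbwBasis_tt, Finsupp.single_apply]

lemma repr_Chi_apply_tt (k ℓ : ℕ) (v : V) :
    ρ.pbwBasis.repr (ρ.Chi v) (k, ℓ, true, true) =
      -ρ.pbwBasis.repr v (k, ℓ, true, false) := by
  have h := ρ.pbwBasis.repr_apply_eq_of_forall ρ.Chi (k, ℓ, true, true)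
    (-ρ.pbwBasis.coord (k, ℓ, true, false)) ?_ v
  · simpa using h
  rintro ⟨k', ℓ', _ | _, _ | _⟩ <;>
    simp [Chi_pbwBasis_ff, Chi_pbwBasis_ft, Chi_pbwBasis_tf, Chi_pbwBasis_tt, Finsupp.single_apply]

/-- `a k ℓ` and `b k ℓ` stand for the coefficients of `G^k K^ℓ v₀` and `G^k K^ℓ S χ v₀` in a
vector `v`; the hypotheses are the coordinates of `Q v = 0` and `P v = 0` in which they occur. -/
lemma singular_coeffs_eq_zero (hm : m ≠ 0) (hd : ∀ p : ℕ, d ≠ (p : ℂ) - 1/2)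
    (a b : ℕ → ℕ → ℂ)
    (hQ : ∀ k ℓ : ℕ, (k + 1) * a (k + 1) ℓ + (d - ℓ - k) * b k ℓ = 0)
    (hQ₀ : ∀ ℓ : ℕ, (ℓ + 1) * a 0 (ℓ + 1) + m / 2 * b 1 ℓ = 0)
    (hP₀ : ∀ ℓ : ℕ, m * a 1 ℓ - m / 2 * b 0 ℓ = 0)
    (hP : ∀ k ℓ : ℕ, (ℓ + 1) * a k (ℓ + 1) + (k + 2) * m * a (k + 2) ℓ - m / 2 * b (k + 1) ℓ = 0)
    (hPb : ∀ ℓ : ℕ, m * b 1 ℓ = 0) :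
    (∀ k ℓ : ℕ, (k, ℓ) ≠ (0, 0) → a k ℓ = 0) ∧ ∀ k ℓ : ℕ, b k ℓ = 0 := by
  have hm2 : m / 2 ≠ 0 := div_ne_zero hm two_ne_zero
  have hd' (p : ℕ) : d - p + 1/2 ≠ 0 := fun h => hd p (by linear_combination h)
  have hb₁ (ℓ : ℕ) : b 1 ℓ = 0 := (mul_eq_zero.mp (hPb ℓ)).resolve_left hm
  have ha₀ (ℓ : ℕ) : a 0 (ℓ + 1) = 0 := by
    have h := hQ₀ ℓ
    rw [hb₁, mul_zero, add_zero] at h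
    exact (mul_eq_zero.mp h).resolve_left (Nat.cast_add_one_ne_zero ℓ)
  have ha₁ (ℓ : ℕ) : a 1 ℓ = 0 := by
    have h : m * (d - ℓ + 1/2) * a 1 ℓ = 0 := by
      linear_combination (m / 2) * hQ 0 ℓ + (d - ℓ) * hP₀ ℓ
    exact (mul_eq_zero.mp h).resolve_left (mul_ne_zero hm (hd' ℓ))
  have ha₂ (k ℓ : ℕ) (h : a k (ℓ + 1) = 0) : a (k + 2) ℓ = 0 := by
    have hQk := hQ (k + 1) ℓ
    have h' : (k + 2 : ℂ) * m * (d - (ℓ + k + 1 : ℕ) + 1/2) * a (k + 2) ℓ = 0 := by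
      push_cast at hQk ⊢
      linear_combination (m / 2) * hQk + (d - ℓ - k - 1) * hP k ℓ
        - (d - ℓ - k - 1) * (ℓ + 1) * h
    refine (mul_eq_zero.mp h').resolve_left (mul_ne_zero (mul_ne_zero ?_ hm) (hd' _))
    exact_mod_cast Nat.succ_ne_zero (k + 1)
  have ha (k : ℕ) : ∀ ℓ : ℕ, (k, ℓ) ≠ (0, 0) → a k ℓ = 0 := by
    induction k using Nat.strong_induction_on with
    | _ k ih =>
      intro ℓ hkℓ
      rcases k with _ | _ | k
      · rcases ℓ with _ | ℓ
        · exact absurd rfl hkℓ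
        · exact ha₀ ℓ
      · exact ha₁ ℓ
      · exact ha₂ k ℓ (ih k (by omega) (ℓ + 1) (by simp))
  refine ⟨ha, fun k ℓ => ?_⟩
  rcases k with _ | k
  · have h := hP₀ ℓ
    rw [ha₁, mul_zero, zero_sub, neg_eq_zero] at h
    exact (mul_eq_zero.mp h).resolve_left hm2
  · have h := hP k ℓ
    rw [ha k (ℓ + 1) (by simp), ha (k + 2) ℓ (by simp), mul_zero, mul_zero, add_zero,
      zero_sub, neg_eq_zero] at h
    exact (mul_eq_zero.mp h).resolve_left hm2

lemma repr_eq_zero_of_Q_eq_zero_of_P_eq_zero (hm : m ≠ 0) (hd : ∀ p : ℕ, d ≠ (p : ℂ) - 1/2)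
    {v : V} (hQ : ρ.Q v = 0) (hP : ρ.P v = 0) :
    (∀ k ℓ : ℕ, (k, ℓ) ≠ (0, 0) → ρ.pbwBasis.repr v (k, ℓ, false, false) = 0) ∧
      ∀ k ℓ : ℕ, ρ.pbwBasis.repr v (k, ℓ, true, true) = 0 := by
  refine singular_coeffs_eq_zero hm hd _ _ (fun k ℓ => ?_) (fun ℓ => ?_) (fun ℓ => ?_)
    (fun k ℓ => ?_) (fun ℓ => ?_)
  · simpa [hQ] using (ρ.repr_Q_apply_ft k ℓ v).symm
  · simpa [hQ] using (ρ.repr_Q_apply_tf_zero ℓ v).symm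
  · simpa [hP] using (ρ.repr_P_apply_ff_zero ℓ v).symm
  · simpa [hP] using (ρ.repr_P_apply_ff_succ k ℓ v).symm
  · simpa [hP] using (ρ.repr_P_apply_tt_zero ℓ v).symm

/-- `χ` (anti)commutes with `Q` and `P`, so it preserves their common kernel, and it exchanges the
coefficients controlled by `repr_eq_zero_of_Q_eq_zero_of_P_eq_zero` with the remaining ones. -/
lemma mem_span_of_Q_eq_zero_of_P_eq_zero (hm : m ≠ 0) (hd : ∀ p : ℕ, d ≠ (p : ℂ) - 1/2)
    {v : V} (hQ : ρ.Q v = 0) (hP : ρ.P v = 0) :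
    v ∈ Submodule.span ℂ {ρ.v0, ρ.Chi ρ.v0} := by
  obtain ⟨ha, hb⟩ := ρ.repr_eq_zero_of_Q_eq_zero_of_P_eq_zero hm hd hQ hP
  obtain ⟨haχ, hbχ⟩ := ρ.repr_eq_zero_of_Q_eq_zero_of_P_eq_zero hm hd
    (by rw [Q_Chi_apply, hQ, map_zero, neg_zero]) (by rw [P_Chi_apply, hP, map_zero])
  refine Submodule.span_mono ?_ (ρ.pbwBasis.mem_span_repr_support v)
  rintro _ ⟨⟨k, ℓ, _ | _, _ | _⟩, hi, rfl⟩ <;>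
    rw [Finset.mem_coe, Finsupp.mem_support_iff] at hi
  · by_cases hkℓ : (k, ℓ) = (0, 0)
    · simp_all [pbwBasis_apply]
    · exact absurd (ha k ℓ hkℓ) hi
  · by_cases hkℓ : (k, ℓ) = (0, 0)
    · simp_all [pbwBasis_apply]
    · have h := haχ k ℓ hkℓ
      rw [repr_Chi_apply_ff] at h
      exact absurd ((mul_eq_zero.mp h).resolve_left (div_ne_zero hm two_ne_zero)) hi
  · have h := hbχ k ℓ
    rw [repr_Chi_apply_tt, neg_eq_zero] at h
    exact absurd h hi
  · exact absurd (hb k ℓ) hi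

/-- The `D`-weight of `G^k K^ℓ S^a χ^c v₀` relative to that of `v₀`. -/
def pbwDegree (i : ℕ × ℕ × Bool × Bool) : ℕ := i.1 + 2 * i.2.1 + i.2.2.1.toNat

noncomputable def pbwFiltration (n : ℕ) : Submodule ℂ V :=
  Submodule.span ℂ (ρ.pbwBasis '' {i | pbwDegree i < n})

lemma pbwFiltration_zero : ρ.pbwFiltration 0 = ⊥ := by
  simp [pbwFiltration]

lemma exists_mem_pbwFiltration (v : V) : ∃ n, v ∈ ρ.pbwFiltration n := by
  refine ⟨(ρ.pbwBasis.repr v).support.sup pbwDegree + 1,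
    Submodule.span_mono ?_ (ρ.pbwBasis.mem_span_repr_support v)⟩
  rintro _ ⟨i, hi, rfl⟩
  exact ⟨i, Nat.lt_succ_of_le (Finset.le_sup hi), rfl⟩

lemma smul_pbwBasis_mem_pbwFiltration {n : ℕ} (c : ℂ) (i : ℕ × ℕ × Bool × Bool)
    (h : c ≠ 0 → pbwDegree i < n) : c • ρ.pbwBasis i ∈ ρ.pbwFiltration n := by
  by_cases hc : c = 0
  · simp [hc]
  · exact Submodule.smul_mem _ c (Submodule.subset_span ⟨i, h hc, rfl⟩)

lemma pbwBasis_mem_pbwFiltration {n : ℕ} (i : ℕ × ℕ × Bool × Bool) (h : pbwDegree i < n) :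
    ρ.pbwBasis i ∈ ρ.pbwFiltration n :=
  Submodule.subset_span ⟨i, h, rfl⟩

lemma Q_mem_pbwFiltration {n : ℕ} {v : V} (hv : v ∈ ρ.pbwFiltration (n + 1)) :
    ρ.Q v ∈ ρ.pbwFiltration n := by
  induction hv using Submodule.span_induction with
  | mem x hx =>
    obtain ⟨⟨k, ℓ, _ | _, _ | _⟩, hi, rfl⟩ := hx <;>
      simp only [Q_pbwBasis_ff, Q_pbwBasis_ft, Q_pbwBasis_tf, Q_pbwBasis_tt] <;>
      apply_rules [add_mem, sub_mem, smul_pbwBasis_mem_pbwFiltration] <;>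
      intro hc <;> simp [pbwDegree] at hi hc ⊢ <;> omega
  | zero => simp
  | add x y _ _ hx hy => simpa using add_mem hx hy
  | smul c x _ hx => simpa using Submodule.smul_mem _ c hx

lemma P_mem_pbwFiltration {n : ℕ} {v : V} (hv : v ∈ ρ.pbwFiltration (n + 1)) :
    ρ.P v ∈ ρ.pbwFiltration n := by
  induction hv using Submodule.span_induction with
  | mem x hx =>
    obtain ⟨⟨k, ℓ, _ | _, _ | _⟩, hi, rfl⟩ := hx <;>
      simp only [P_pbwBasis_ff, P_pbwBasis_ft, P_pbwBasis_tf, P_pbwBasis_tt] <;>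
      apply_rules [add_mem, sub_mem, smul_pbwBasis_mem_pbwFiltration,
        pbwBasis_mem_pbwFiltration] <;>
      (try intro hc) <;> simp [pbwDegree] at * <;> omega
  | zero => simp
  | add x y _ _ hx hy => simpa using add_mem hx hy
  | smul c x _ hx => simpa using Submodule.smul_mem _ c hx

section

variable {ρ} {W : Submodule ℂ V}

lemma Invariant.P_mem (hW : ρ.Invariant W) {w : V} (hw : w ∈ W) : ρ.P w ∈ W :=
  (hW w hw).2.1

lemma Invariant.G_mem (hW : ρ.Invariant W) {w : V} (hw : w ∈ W) : ρ.G w ∈ W :=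
  (hW w hw).2.2.1

lemma Invariant.K_mem (hW : ρ.Invariant W) {w : V} (hw : w ∈ W) : ρ.K w ∈ W :=
  (hW w hw).2.2.2.2.1

lemma Invariant.Q_mem (hW : ρ.Invariant W) {w : V} (hw : w ∈ W) : ρ.Q w ∈ W :=
  (hW w hw).2.2.2.2.2.2.1

lemma Invariant.S_mem (hW : ρ.Invariant W) {w : V} (hw : w ∈ W) : ρ.S w ∈ W :=
  (hW w hw).2.2.2.2.2.2.2.1

lemma Invariant.Chi_mem (hW : ρ.Invariant W) {w : V} (hw : w ∈ W) : ρ.Chi w ∈ W :=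
  (hW w hw).2.2.2.2.2.2.2.2.2

end

lemma exists_ne_zero_Q_eq_zero_P_eq_zero {W : Submodule ℂ V} (hW : ρ.Invariant W) (n : ℕ) :
    ∀ w ∈ W, w ∈ ρ.pbwFiltration n → w ≠ 0 → ∃ u ∈ W, u ≠ 0 ∧ ρ.Q u = 0 ∧ ρ.P u = 0 := by
  induction n with
  | zero =>
    intro w _ hwn hw0
    rw [pbwFiltration_zero, Submodule.mem_bot] at hwn
    exact absurd hwn hw0
  | succ n ih =>
    intro w hw hwn hw0
    by_cases hQ : ρ.Q w = 0
    · by_cases hP : ρ.P w = 0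
      · exact ⟨w, hw, hw0, hQ, hP⟩
      · exact ih _ (hW.P_mem hw) (ρ.P_mem_pbwFiltration hwn) hP
    · exact ih _ (hW.Q_mem hw) (ρ.Q_mem_pbwFiltration hwn) hQ

/-- For `w = a v₀ + b χ v₀` one has `χ w - Q (G w) = (b m) v₀`. -/
lemma v0_mem_of_mem_span (hm : m ≠ 0) {W : Submodule ℂ V} (hW : ρ.Invariant W) {w : V}
    (hw : w ∈ W) (hw0 : w ≠ 0) (hspan : w ∈ Submodule.span ℂ {ρ.v0, ρ.Chi ρ.v0}) : ρ.v0 ∈ W := by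
  obtain ⟨a, b, rfl⟩ := Submodule.mem_span_pair.mp hspan
  by_cases hb : b = 0
  · have ha : a ≠ 0 := by rintro rfl; simp [hb] at hw0
    simpa [hb, smul_smul, ha] using W.smul_mem a⁻¹ hw
  · have hQG : ρ.Q (ρ.G (a • ρ.v0 + b • ρ.Chi ρ.v0)) = a • ρ.Chi ρ.v0 - (b * (m / 2)) • ρ.v0 := by
      have h₁ := ρ.Q_pbwBasis_ff 1 0
      have h₂ := ρ.Q_pbwBasis_ft 1 0
      simp [pbwBasis_apply] at h₁ h₂
      simp [h₁, h₂, mul_smul, sub_eq_add_neg]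
    have key : (b * m)⁻¹ • (ρ.Chi (a • ρ.v0 + b • ρ.Chi ρ.v0) -
        ρ.Q (ρ.G (a • ρ.v0 + b • ρ.Chi ρ.v0))) = ρ.v0 := by
      rw [hQG, map_add, map_smul, map_smul, Chi_Chi_apply, smul_smul]
      rw [show a • ρ.Chi ρ.v0 + (b * (m / 2)) • ρ.v0 - (a • ρ.Chi ρ.v0 - (b * (m / 2)) • ρ.v0)
        = (b * m) • ρ.v0 by module, smul_smul, inv_mul_cancel₀ (mul_ne_zero hb hm), one_smul]
    rw [← key]
    exact W.smul_mem _ (W.sub_mem (hW.Chi_mem hw) (hW.Q_mem (hW.G_mem hw)))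

lemma eq_top_of_v0_mem {W : Submodule ℂ V} (hW : ρ.Invariant W) (hv0 : ρ.v0 ∈ W) : W = ⊤ := by
  have hpow {T : Module.End ℂ V} (hT : ∀ w ∈ W, T w ∈ W) (n : ℕ) {w : V} (hw : w ∈ W) :
      (T ^ n) w ∈ W := by
    induction n with
    | zero => simpa using hw
    | succ n ih => simpa [pow_succ'] using hT _ ih
  rw [eq_top_iff, ← ρ.pbwBasis.span_eq, Submodule.span_le]
  rintro _ ⟨⟨k, ℓ, a, c⟩, rfl⟩
  rw [pbwBasis_apply]
  refine hpow (fun _ => hW.G_mem) k (hpow (fun _ => hW.K_mem) ℓ ?_)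
  cases a <;> cases c <;> simp only [if_true, if_false, Bool.false_eq_true, Module.End.one_apply]
  exacts [hv0, hW.Chi_mem hv0, hW.S_mem hv0, hW.S_mem (hW.Chi_mem hv0)]

end SSch1Verma

/-- For `m ≠ 0`, if `d ≠ p - 1/2` for every `p ∈ ℤ≥0`, then the Verma
module `V^d` over 𝔰(1/1) is irreducible. -/
theorem statement6 {d m : ℂ} {V : Type*} [AddCommGroup V] [Module ℂ V]
    (ρ : SSch1Verma d m V) (hm : m ≠ 0) (hd : ∀ p : ℕ, d ≠ (p : ℂ) - 1/2) :
    ∀ W : Submodule ℂ V, ρ.Invariant W → W = ⊥ ∨ W = ⊤ := by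
  intro W hW
  refine or_iff_not_imp_left.mpr fun hW0 => ?_
  obtain ⟨w, hw, hw0⟩ := (Submodule.ne_bot_iff W).mp hW0
  obtain ⟨n, hwn⟩ := ρ.exists_mem_pbwFiltration w
  obtain ⟨u, hu, hu0, hQ, hP⟩ := ρ.exists_ne_zero_Q_eq_zero_P_eq_zero hW n w hw hwn hw0
  exact ρ.eq_top_of_v0_mem hW
    (ρ.v0_mem_of_mem_span hm hW hu hu0 (ρ.mem_span_of_Q_eq_zero_of_P_eq_zero hm hd hQ hP))
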